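/- Let (w_n)_{n∈ℤ} and (v_n)_{n∈ℤ} be sequences of complex numbers with |w_n| = |v_n| = 1 for all n, let α be a nonzero complex number, and let T = T(w_n, v_n, α) be the associated bounded block-shift operator on H ⊕ H (i.e. with d_n = α for all n). Suppose there exists i₀ ∈ ℤ such that for all m, n ∈ ℤ the equality |w_n − v_n|² = |w_m − v_m|² holds only when m = n or m = −(n + i₀). If for every n ∈ ℤ at least one of the following holds, where c_n = w_n − v_n: (1) w_n·w_{n−1}·conj(c_n)·conj(c_{n−1}) is not a real number; (2) (1 − w_n·conj(v_n))·|w_{n−1} − v_{n−1}|² ≠ (1 − conj(w_{n−1})·v_{n−1})·|w_n − v_n|²; then T is irreducible. -/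

import Mathlib

noncomputable section

open Complex Metric

/-- `ℓ²(ℤ)` over `ℂ`. -/
abbrev Hl : Type := lp (fun _ : ℤ => ℂ) 2

/-- The standard orthonormal basis of `ℓ²(ℤ)`. -/
def eb (n : ℤ) : Hl := lp.single 2 n 1

/-- The Hilbert space direct sum `H ⊕ H`. -/
abbrev H2 : Type := WithLp 2 (Hl × Hl)

/-- A bounded operator on a Hilbert space is irreducible if the only closed subspaces
invariant under both it and its adjoint are `⊥` and `⊤`. -/
def IsIrreducibleOp {E : Type*} [NormedAddCommGroup E] [InnerProductSpace ℂ E] [CompleteSpace E]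
    (A : E →L[ℂ] E) : Prop :=
  ∀ K : Submodule ℂ E, IsClosed (K : Set E) →
    (∀ x ∈ K, A x ∈ K) → (∀ x ∈ K, ContinuousLinearMap.adjoint A x ∈ K) →
    K = ⊥ ∨ K = ⊤

/-- The block operator `(x, y) ↦ (T₀ x + (X T₁ − T₀ X) y, T₁ y)` on the Hilbert space
direct sum `H₀ ⊕ H₁`. -/
def blockT2 {H0 H1 : Type*} [NormedAddCommGroup H0] [NormedSpace ℂ H0]
    [NormedAddCommGroup H1] [NormedSpace ℂ H1]
    (T0 : H0 →L[ℂ] H0) (T1 : H1 →L[ℂ] H1) (X : H1 →L[ℂ] H0) :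
    WithLp 2 (H0 × H1) →L[ℂ] WithLp 2 (H0 × H1) :=
  let E := WithLp.prodContinuousLinearEquiv 2 ℂ H0 H1
  (E.symm.toContinuousLinearMap).comp
    ((((T0.comp (ContinuousLinearMap.fst ℂ H0 H1)) +
        ((X.comp T1 - T0.comp X).comp (ContinuousLinearMap.snd ℂ H0 H1))).prod
      (T1.comp (ContinuousLinearMap.snd ℂ H0 H1))).comp E.toContinuousLinearMap)

/-- The block operator `T(wₙ, vₙ, dₙ)` on `ℓ²(ℤ) ⊕ ℓ²(ℤ)`. -/
def blockT (T0 T1 X : Hl →L[ℂ] Hl) : H2 →L[ℂ] H2 := blockT2 T0 T1 X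

open ComplexConjugate

/-!
A reducing subspace of `T` is the range of an orthogonal projection commuting with `T`, so it
suffices to show that every self-adjoint `P` commuting with `T = T(w, v, α)` is a scalar.
Comparing the matrix entries `A, B, C, D` of `P T` and `T P`, and using `P = P*`, gives
`conj cₘ A (m+1) (n+1) = conj cₙ D m n` and `cₙ A (m+1) (n+1) = cₘ D m n` with `c = w - v`; hence
`A (m+1) (n+1) = 0` unless `|cₘ| = |cₙ|`, and by the hypothesis on `i₀` the matrix `A` lives on
the diagonal and one antidiagonal. Vanishing of `C`, and of off-diagonal entries of `A`, is
propagated along diagonals, which kills `C`, `B` and the off-diagonal parts of `A` and `D`.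
On the diagonal `|C n n|` is constant while `|cₙ| |C (n+1) (n+1)| = |cₙ₊₁| |C (n+1) (n+1)|`, so
`C n n ≠ 0` would make `|cₙ|` constant, against the `i₀` hypothesis; then `D n n` and
`A (n+1) (n+1) = D n n` are constant.
-/

theorem apply_eq_apply_zero_of_add_one {β : Type*} {f : ℤ → β} (h : ∀ n, f (n + 1) = f n)
    (n : ℤ) : f n = f 0 := by
  simpa using Function.Periodic.int_mul_eq h n

theorem diag_shift_eq_zero_iff {M : Type*} [Zero M] {F : ℤ → ℤ → M}
    (hF : ∀ p q, p ≠ q → (F (p + 1) (q + 1) = 0 ↔ F p q = 0)) {p q : ℤ} (hpq : p ≠ q) (j : ℤ) :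
    F (p + j) (q + j) = 0 ↔ F p q = 0 := by
  have step (k : ℤ) : (F (p + (k + 1)) (q + (k + 1)) = 0) = (F (p + k) (q + k) = 0) := by
    rw [← add_assoc, ← add_assoc]
    exact propext (hF _ _ (by omega))
  simpa using (apply_eq_apply_zero_of_add_one (f := fun k => F (p + k) (q + k) = 0) step j).to_iff

section StarProjection

variable {𝕜 E : Type*} [RCLike 𝕜] [NormedAddCommGroup E] [InnerProductSpace 𝕜 E]

theorem Submodule.commute_starProjection [CompleteSpace E] (K : Submodule 𝕜 E)
    [K.HasOrthogonalProjection] {A : E →L[𝕜] E} (hA : ∀ x ∈ K, A x ∈ K)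
    (hA' : ∀ x ∈ K, A.adjoint x ∈ K) : Commute K.starProjection A := by
  rw [ContinuousLinearMap.IsIdempotentElem.commute_iff K.isIdempotentElem_starProjection,
    range_starProjection, ker_starProjection, ← ContinuousLinearMap.mem_invtSubmodule_adjoint_iff,
    Module.End.mem_invtSubmodule_iff_forall_mem_of_mem,
    Module.End.mem_invtSubmodule_iff_forall_mem_of_mem]
  exact ⟨hA, hA'⟩

theorem Submodule.eq_bot_or_eq_top_of_starProjection_eq_smul [Nontrivial E] (K : Submodule 𝕜 E)
    [K.HasOrthogonalProjection] {c : 𝕜} (h : K.starProjection = c • 1) : K = ⊥ ∨ K = ⊤ := by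
  obtain ⟨x, hx⟩ := exists_ne (0 : E)
  have hc : IsIdempotentElem c := by
    have := congrArg (fun f => f x) K.isIdempotentElem_starProjection.eq
    rw [h] at this
    exact smul_left_injective 𝕜 hx (by simpa [mul_smul] using this)
  rcases IsIdempotentElem.iff_eq_zero_or_one.1 hc with rfl | rfl
  · left
    rwa [zero_smul, ← starProjection_bot, starProjection_inj] at h
  · right
    rwa [one_smul, ← starProjection_top', starProjection_inj] at h

end StarProjection

theorem isIrreducibleOp_of_forall_commute {E : Type*} [NormedAddCommGroup E]
    [InnerProductSpace ℂ E] [CompleteSpace E] [Nontrivial E] (A : E →L[ℂ] E)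
    (h : ∀ P : E →L[ℂ] E, IsSelfAdjoint P → Commute P A → ∃ c : ℂ, P = c • 1) :
    IsIrreducibleOp A := by
  intro K hK hA hA'
  have : CompleteSpace K := hK.completeSpace_coe
  obtain ⟨c, hc⟩ := h _ (isSelfAdjoint_starProjection K) (K.commute_starProjection hA hA')
  exact K.eq_bot_or_eq_top_of_starProjection_eq_smul hc

lemma eb_apply (n k : ℤ) : eb n k = if k = n then 1 else 0 := by
  simp [eb, lp.single_apply, Pi.single_apply]

lemma inner_eb_left (n : ℤ) (f : Hl) : inner ℂ (eb n) f = f n := by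
  simp [eb, lp.inner_single_left]

lemma weightedShift_apply {u : ℤ → ℂ} {s : ℤ} {T : Hl →L[ℂ] Hl}
    (hT : ∀ n, T (eb n) = u n • eb (n + s)) (f : Hl) (m : ℤ) :
    T f m = u (m - s) * f (m - s) := by
  have hadj : T.adjoint (eb m) = conj (u (m - s)) • eb (m - s) := by
    ext k
    rw [← inner_eb_left, ContinuousLinearMap.adjoint_inner_right, hT, inner_smul_left,
      inner_eb_left, lp.coeFn_smul, Pi.smul_apply, eb_apply, eb_apply, smul_eq_mul]
    by_cases hk : k = m - s
    · simp [hk]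
    · simp [hk, show k + s ≠ m by omega]
  rw [← inner_eb_left, ← ContinuousLinearMap.adjoint_inner_left, hadj, inner_smul_left,
    inner_eb_left, conj_conj]

lemma eq_smul_one_of_apply_eb {α : ℂ} {X : Hl →L[ℂ] Hl} (hX : ∀ n, X (eb n) = α • eb n) :
    X = α • 1 := by
  ext f m
  rw [weightedShift_apply (s := 0) (by simpa using hX) f m]
  simp

def E0 (n : ℤ) : H2 := WithLp.toLp 2 (eb n, 0)

def E1 (n : ℤ) : H2 := WithLp.toLp 2 (0, eb n)

lemma inner_E0_left (n : ℤ) (z : H2) : inner ℂ (E0 n) z = z.fst n := by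
  simp [E0, WithLp.prod_inner_apply, inner_eb_left]

lemma inner_E1_left (n : ℤ) (z : H2) : inner ℂ (E1 n) z = z.snd n := by
  simp [E1, WithLp.prod_inner_apply, inner_eb_left]

lemma H2_ext {z z' : H2} (h0 : z.fst = z'.fst) (h1 : z.snd = z'.snd) : z = z' :=
  WithLp.ofLp_injective 2 (Prod.ext h0 h1)

instance : Nontrivial H2 :=
  ⟨E0 0, 0, fun h => by simpa [E0, eb_apply] using congrArg (fun z : H2 => z.fst 0) h⟩

section BlockT

variable {w v : ℤ → ℂ} {α : ℂ} {T0 T1 : Hl →L[ℂ] Hl}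

lemma blockT_smul_one_fst (z : H2) :
    (blockT T0 T1 (α • 1) z).fst = T0 z.fst + α • (T1 z.snd - T0 z.snd) := by
  simp [blockT, blockT2, smul_sub]

lemma blockT_smul_one_snd (z : H2) : (blockT T0 T1 (α • 1) z).snd = T1 z.snd := rfl

lemma blockT_smul_one_fst_apply (hT0 : ∀ n, T0 (eb n) = w n • eb (n + 1))
    (hT1 : ∀ n, T1 (eb n) = v n • eb (n + 1)) (z : H2) (m : ℤ) :
    (blockT T0 T1 (α • 1) z).fst (m + 1) = w m * z.fst m + α * (v m - w m) * z.snd m := by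
  simp only [blockT_smul_one_fst, lp.coeFn_add, lp.coeFn_smul, lp.coeFn_sub, Pi.add_apply,
    Pi.smul_apply, Pi.sub_apply, weightedShift_apply hT0, weightedShift_apply hT1,
    add_sub_cancel_right, smul_eq_mul]
  ring

lemma blockT_smul_one_snd_apply (hT1 : ∀ n, T1 (eb n) = v n • eb (n + 1)) (z : H2) (m : ℤ) :
    (blockT T0 T1 (α • 1) z).snd (m + 1) = v m * z.snd m := by
  simp [blockT_smul_one_snd, weightedShift_apply hT1]

lemma blockT_smul_one_E0 (hT0 : ∀ n, T0 (eb n) = w n • eb (n + 1)) (n : ℤ) :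
    blockT T0 T1 (α • 1) (E0 n) = w n • E0 (n + 1) := by
  apply H2_ext
  · simp [blockT_smul_one_fst, E0, hT0]
  · simp [blockT_smul_one_snd, E0]

lemma blockT_smul_one_E1 (hT0 : ∀ n, T0 (eb n) = w n • eb (n + 1))
    (hT1 : ∀ n, T1 (eb n) = v n • eb (n + 1)) (n : ℤ) :
    blockT T0 T1 (α • 1) (E1 n) = (α * (v n - w n)) • E0 (n + 1) + v n • E1 (n + 1) := by
  apply H2_ext
  · simp [blockT_smul_one_fst, E0, E1, hT0, hT1, mul_smul, sub_smul]
  · simp [blockT_smul_one_snd, E0, E1, hT1]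

end BlockT

/-- The entries `A m n = ⟪E0 m, P (E0 n)⟫`, `B m n = ⟪E0 m, P (E1 n)⟫`, `C m n = ⟪E1 m, P (E0 n)⟫`,
`D m n = ⟪E1 m, P (E1 n)⟫` of a self-adjoint `P` commuting with `T(w, v, α)`: the `conj` fields
express `P = P*`, and `relij` compares the `i`-th component of `P T` and `T P` on `Ej n`. -/
structure IsBlockCommutant (w v : ℤ → ℂ) (α : ℂ) (A B C D : ℤ → ℤ → ℂ) : Prop where
  A_conj : ∀ m n, A m n = conj (A n m)
  D_conj : ∀ m n, D m n = conj (D n m)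
  C_conj : ∀ m n, C m n = conj (B n m)
  rel00 : ∀ m n, w n * A (m + 1) (n + 1) = w m * A m n - α * (w m - v m) * C m n
  rel10 : ∀ m n, w n * C (m + 1) (n + 1) = v m * C m n
  rel01 : ∀ m n, -(α * (w n - v n)) * A (m + 1) (n + 1) + v n * B (m + 1) (n + 1) =
    w m * B m n - α * (w m - v m) * D m n
  rel11 : ∀ m n, -(α * (w n - v n)) * C (m + 1) (n + 1) + v n * D (m + 1) (n + 1) =
    v m * D m n

namespace IsBlockCommutant

variable {w v : ℤ → ℂ} {α : ℂ} {A B C D : ℤ → ℤ → ℂ}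

theorem conj_mul_A_eq (h : IsBlockCommutant w v α A B C D) (hw : ∀ n, ‖w n‖ = 1)
    (hv : ∀ n, ‖v n‖ = 1) (hα : α ≠ 0) (m n : ℤ) :
    conj (w m - v m) * A (m + 1) (n + 1) = conj (w n - v n) * D m n := by
  have h01 := congrArg conj (h.rel01 n m)
  simp only [map_add, map_mul, map_sub, map_neg] at h01
  rw [← h.A_conj, ← h.C_conj, ← h.C_conj, ← h.D_conj] at h01
  have hw1 : conj (w n) * w n = 1 := by rw [RCLike.conj_mul, hw]; simp
  have hv1 : conj (v m) * v m = 1 := by rw [RCLike.conj_mul, hv]; simp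
  refine mul_left_cancel₀ ((map_ne_zero conj).2 hα) ?_
  simp only [map_sub]
  linear_combination -h01 + conj (v m) * conj (w n) * h.rel10 m n
    - conj (v m) * C (m + 1) (n + 1) * hw1 + conj (w n) * C m n * hv1

theorem mul_A_eq (h : IsBlockCommutant w v α A B C D) (hw : ∀ n, ‖w n‖ = 1)
    (hv : ∀ n, ‖v n‖ = 1) (hα : α ≠ 0) (m n : ℤ) :
    (w n - v n) * A (m + 1) (n + 1) = (w m - v m) * D m n := by
  have := congrArg conj (h.conj_mul_A_eq hw hv hα n m)
  simpa only [map_mul, conj_conj, ← h.A_conj, ← h.D_conj] using this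

theorem A_eq_zero_of_norm_ne (h : IsBlockCommutant w v α A B C D) (hw : ∀ n, ‖w n‖ = 1)
    (hv : ∀ n, ‖v n‖ = 1) (hα : α ≠ 0) {m n : ℤ} (hmn : ‖w n - v n‖ ^ 2 ≠ ‖w m - v m‖ ^ 2) :
    A (m + 1) (n + 1) = 0 := by
  have key : ((‖w n - v n‖ ^ 2 - ‖w m - v m‖ ^ 2 : ℝ) : ℂ) * A (m + 1) (n + 1) = 0 := by
    push_cast
    rw [← Complex.mul_conj', ← Complex.mul_conj']
    linear_combination conj (w n - v n) * h.mul_A_eq hw hv hα m n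
      - (w m - v m) * h.conj_mul_A_eq hw hv hα m n
  refine (mul_eq_zero.1 key).resolve_left ?_
  exact_mod_cast sub_ne_zero.2 hmn

theorem A_eq_zero_of_add_ne (h : IsBlockCommutant w v α A B C D) (hw : ∀ n, ‖w n‖ = 1)
    (hv : ∀ n, ‖v n‖ = 1) (hα : α ≠ 0) {i0 : ℤ}
    (hinj : ∀ m n, ‖w n - v n‖ ^ 2 = ‖w m - v m‖ ^ 2 → m = n ∨ m = -(n + i0))
    {p q : ℤ} (hpq : p ≠ q) (hs : p + q ≠ 2 - i0) : A p q = 0 := by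
  have := h.A_eq_zero_of_norm_ne hw hv hα (m := p - 1) (n := q - 1)
    (fun he => by rcases hinj _ _ he with h' | h' <;> omega)
  simpa using this

theorem C_succ_eq_zero_iff (h : IsBlockCommutant w v α A B C D) (hw : ∀ n, w n ≠ 0)
    (hv : ∀ n, v n ≠ 0) (p q : ℤ) : C (p + 1) (q + 1) = 0 ↔ C p q = 0 := by
  calc C (p + 1) (q + 1) = 0 ↔ w q * C (p + 1) (q + 1) = 0 := by simp [hw]
    _ ↔ v p * C p q = 0 := by rw [h.rel10]
    _ ↔ C p q = 0 := by simp [hv]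

theorem A_succ_eq_zero_iff (h : IsBlockCommutant w v α A B C D) (hw : ∀ n, w n ≠ 0)
    {p q : ℤ} (hC : C p q = 0) : A (p + 1) (q + 1) = 0 ↔ A p q = 0 := by
  calc A (p + 1) (q + 1) = 0 ↔ w q * A (p + 1) (q + 1) = 0 := by simp [hw]
    _ ↔ w p * A p q = 0 := by rw [h.rel00, hC, mul_zero, sub_zero]
    _ ↔ A p q = 0 := by simp [hw]

/-- Moving along the diagonal until both `A`-entries in `rel00` lie off the antidiagonal. -/
theorem C_eq_zero_of_ne (h : IsBlockCommutant w v α A B C D) (hw : ∀ n, w n ≠ 0)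
    (hv : ∀ n, v n ≠ 0) (hα : α ≠ 0) (hc : ∀ n, w n - v n ≠ 0) {s : ℤ}
    (hA : ∀ p q, p ≠ q → p + q ≠ s → A p q = 0) {p q : ℤ} (hpq : p ≠ q) : C p q = 0 := by
  obtain ⟨j, hj⟩ : ∃ j : ℤ, s < p + q + 2 * j := ⟨(s - p - q).natAbs + 1, by omega⟩
  rw [← diag_shift_eq_zero_iff (fun p q _ => h.C_succ_eq_zero_iff hw hv p q) hpq j]
  have h00 := h.rel00 (p + j) (q + j)
  rw [hA _ _ (by omega) (by omega), hA _ _ (by omega) (by omega)] at h00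
  simpa [hα, hc] using h00

theorem A_eq_zero_of_ne (h : IsBlockCommutant w v α A B C D) (hw : ∀ n, w n ≠ 0)
    (hC : ∀ p q, p ≠ q → C p q = 0) {s : ℤ} (hA : ∀ p q, p ≠ q → p + q ≠ s → A p q = 0)
    {p q : ℤ} (hpq : p ≠ q) : A p q = 0 := by
  obtain ⟨j, hj⟩ : ∃ j : ℤ, s < p + q + 2 * j := ⟨(s - p - q).natAbs + 1, by omega⟩
  rw [← diag_shift_eq_zero_iff (fun p q hne => h.A_succ_eq_zero_iff hw (hC p q hne)) hpq j]
  exact hA _ _ (by omega) (by omega)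

theorem D_eq_zero_of_ne (h : IsBlockCommutant w v α A B C D) (hw : ∀ n, ‖w n‖ = 1)
    (hv : ∀ n, ‖v n‖ = 1) (hα : α ≠ 0) (hc : ∀ n, w n - v n ≠ 0)
    (hA : ∀ p q, p ≠ q → A p q = 0) {m n : ℤ} (hmn : m ≠ n) : D m n = 0 := by
  have := h.conj_mul_A_eq hw hv hα m n
  rw [hA _ _ (by omega), mul_zero] at this
  exact (mul_eq_zero.1 this.symm).resolve_left ((map_ne_zero conj).2 (hc n))

theorem A_succ_diag (h : IsBlockCommutant w v α A B C D) (hw : ∀ n, ‖w n‖ = 1)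
    (hv : ∀ n, ‖v n‖ = 1) (hα : α ≠ 0) (hc : ∀ n, w n - v n ≠ 0) (n : ℤ) :
    A (n + 1) (n + 1) = D n n :=
  mul_left_cancel₀ ((map_ne_zero conj).2 (hc n)) (h.conj_mul_A_eq hw hv hα n n)

theorem norm_C_diag (h : IsBlockCommutant w v α A B C D) (hw : ∀ n, ‖w n‖ = 1)
    (hv : ∀ n, ‖v n‖ = 1) (n : ℤ) : ‖C n n‖ = ‖C 0 0‖ := by
  refine apply_eq_apply_zero_of_add_one (f := fun k => ‖C k k‖) (fun k => ?_) n
  simpa [hw, hv] using congrArg norm (h.rel10 k k)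

/-- Both `rel11 n n` and `rel00 (n + 1) (n + 1)` express `D (n + 1) (n + 1) - D n n`
through `C (n + 1) (n + 1)`. -/
theorem norm_sub_mul_norm_C_diag (h : IsBlockCommutant w v α A B C D) (hw : ∀ n, ‖w n‖ = 1)
    (hv : ∀ n, ‖v n‖ = 1) (hα : α ≠ 0) (hc : ∀ n, w n - v n ≠ 0) (n : ℤ) :
    ‖w n - v n‖ * ‖C (n + 1) (n + 1)‖ = ‖w (n + 1) - v (n + 1)‖ * ‖C (n + 1) (n + 1)‖ := by
  have h11 : α * (w n - v n) * C (n + 1) (n + 1) = v n * (D (n + 1) (n + 1) - D n n) := by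
    linear_combination -h.rel11 n n
  have h00 : α * (w (n + 1) - v (n + 1)) * C (n + 1) (n + 1) =
      w (n + 1) * (D n n - D (n + 1) (n + 1)) := by
    have := h.rel00 (n + 1) (n + 1)
    rw [h.A_succ_diag hw hv hα hc, h.A_succ_diag hw hv hα hc] at this
    linear_combination this
  have e11 := congrArg norm h11
  have e00 := congrArg norm h00
  simp only [norm_mul, hw, hv, one_mul, norm_sub_rev (D n n)] at e11 e00
  refine mul_left_cancel₀ (norm_ne_zero_iff.2 hα) ?_
  linear_combination e11 - e00

theorem C_diag_eq_zero (h : IsBlockCommutant w v α A B C D) (hw : ∀ n, ‖w n‖ = 1)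
    (hv : ∀ n, ‖v n‖ = 1) (hα : α ≠ 0) (hc : ∀ n, w n - v n ≠ 0) {i0 : ℤ}
    (hinj : ∀ m n, ‖w n - v n‖ ^ 2 = ‖w m - v m‖ ^ 2 → m = n ∨ m = -(n + i0)) (n : ℤ) :
    C n n = 0 := by
  by_contra hC
  have hC' (k : ℤ) : ‖C k k‖ ≠ 0 := by
    rw [h.norm_C_diag hw hv, ← h.norm_C_diag hw hv n]; exact norm_ne_zero_iff.2 hC
  have hconst (k : ℤ) : ‖w k - v k‖ = ‖w 0 - v 0‖ :=
    apply_eq_apply_zero_of_add_one (f := fun k => ‖w k - v k‖)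
      (fun k => (mul_right_cancel₀ (hC' _) (h.norm_sub_mul_norm_C_diag hw hv hα hc k)).symm) k
  rcases hinj 1 0 (by rw [hconst 1]) with h1 | h1 <;>
    rcases hinj 2 0 (by rw [hconst 2]) with h2 | h2 <;> omega

theorem eq_scalar (h : IsBlockCommutant w v α A B C D) (hw : ∀ n, ‖w n‖ = 1)
    (hv : ∀ n, ‖v n‖ = 1) (hα : α ≠ 0) (hc : ∀ n, w n - v n ≠ 0) {i0 : ℤ}
    (hinj : ∀ m n, ‖w n - v n‖ ^ 2 = ‖w m - v m‖ ^ 2 → m = n ∨ m = -(n + i0)) :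
    (∀ m n, A m n = if m = n then D 0 0 else 0) ∧ (∀ m n, B m n = 0) ∧ (∀ m n, C m n = 0) ∧
      (∀ m n, D m n = if m = n then D 0 0 else 0) := by
  have hw0 (n : ℤ) : w n ≠ 0 := norm_ne_zero_iff.1 (by simp [hw])
  have hv0 (n : ℤ) : v n ≠ 0 := norm_ne_zero_iff.1 (by simp [hv])
  have hAs (p q : ℤ) (hpq : p ≠ q) (hs : p + q ≠ 2 - i0) : A p q = 0 :=
    h.A_eq_zero_of_add_ne hw hv hα hinj hpq hs
  have hC (m n : ℤ) : C m n = 0 := by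
    rcases eq_or_ne m n with rfl | hmn
    · exact h.C_diag_eq_zero hw hv hα hc hinj m
    · exact h.C_eq_zero_of_ne hw0 hv0 hα hc hAs hmn
  have hA (p q : ℤ) (hpq : p ≠ q) : A p q = 0 := h.A_eq_zero_of_ne hw0 (fun p q _ => hC p q) hAs hpq
  have hD (n : ℤ) : D n n = D 0 0 :=
    apply_eq_apply_zero_of_add_one (f := fun n => D n n)
      (fun n => by simpa [hC, hv0] using h.rel11 n n) n
  refine ⟨fun m n => ?_, fun m n => by simpa [hC] using (h.C_conj n m).symm, hC, fun m n => ?_⟩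
  · split_ifs with hmn
    · rw [hmn, ← sub_add_cancel n 1, h.A_succ_diag hw hv hα hc, hD]
    · exact hA m n hmn
  · split_ifs with hmn
    · rw [hmn, hD]
    · exact h.D_eq_zero_of_ne hw hv hα hc hA hmn

end IsBlockCommutant

theorem isBlockCommutant_of_commute {w v : ℤ → ℂ} {α : ℂ} {T0 T1 : Hl →L[ℂ] Hl}
    (hT0 : ∀ n, T0 (eb n) = w n • eb (n + 1)) (hT1 : ∀ n, T1 (eb n) = v n • eb (n + 1))
    {P : H2 →L[ℂ] H2} (hP : IsSelfAdjoint P) (hPT : Commute P (blockT T0 T1 (α • 1))) :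
    IsBlockCommutant w v α (fun m n => (P (E0 n)).fst m) (fun m n => (P (E1 n)).fst m)
      (fun m n => (P (E0 n)).snd m) (fun m n => (P (E1 n)).snd m) := by
  have hsymm (x y : H2) : inner ℂ x (P y) = conj (inner ℂ y (P x)) := by
    rw [inner_conj_symm, ← ContinuousLinearMap.adjoint_inner_left, hP.adjoint_eq]
  have hcomm (x : H2) : P (blockT T0 T1 (α • 1) x) = blockT T0 T1 (α • 1) (P x) :=
    congrArg (fun f => f x) hPT.eq
  have hfst (x : H2) (m : ℤ) : (P (blockT T0 T1 (α • 1) x)).fst (m + 1) =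
      w m * (P x).fst m + α * (v m - w m) * (P x).snd m := by
    rw [hcomm, blockT_smul_one_fst_apply hT0 hT1]
  have hsnd (x : H2) (m : ℤ) :
      (P (blockT T0 T1 (α • 1) x)).snd (m + 1) = v m * (P x).snd m := by
    rw [hcomm, blockT_smul_one_snd_apply hT1]
  refine ⟨fun m n => ?_, fun m n => ?_, fun m n => ?_, fun m n => ?_, fun m n => ?_,
    fun m n => ?_, fun m n => ?_⟩
  · simp only [← inner_E0_left, hsymm (E0 m)]
  · simp only [← inner_E1_left, hsymm (E1 m)]
  · simp only [← inner_E1_left, ← inner_E0_left, hsymm (E1 m)]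
  · have := hfst (E0 n) m
    simp only [blockT_smul_one_E0 hT0, map_smul, WithLp.smul_fst, lp.coeFn_smul, Pi.smul_apply,
      smul_eq_mul] at this
    linear_combination this
  · have := hsnd (E0 n) m
    simp only [blockT_smul_one_E0 hT0, map_smul, WithLp.smul_snd, lp.coeFn_smul, Pi.smul_apply,
      smul_eq_mul] at this
    linear_combination this
  · have := hfst (E1 n) m
    simp only [blockT_smul_one_E1 hT0 hT1, map_add, map_smul, WithLp.add_fst, WithLp.smul_fst,
      lp.coeFn_add, lp.coeFn_smul, Pi.add_apply, Pi.smul_apply, smul_eq_mul] at this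
    linear_combination this
  · have := hsnd (E1 n) m
    simp only [blockT_smul_one_E1 hT0 hT1, map_add, map_smul, WithLp.add_snd, WithLp.smul_snd,
      lp.coeFn_add, lp.coeFn_smul, Pi.add_apply, Pi.smul_apply, smul_eq_mul] at this
    linear_combination this

theorem exists_eq_smul_one_of_commute_blockT {w v : ℤ → ℂ} (hw : ∀ n, ‖w n‖ = 1)
    (hv : ∀ n, ‖v n‖ = 1) {α : ℂ} (hα : α ≠ 0) (hc : ∀ n, w n - v n ≠ 0) {i0 : ℤ}
    (hinj : ∀ m n, ‖w n - v n‖ ^ 2 = ‖w m - v m‖ ^ 2 → m = n ∨ m = -(n + i0))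
    {T0 T1 : Hl →L[ℂ] Hl} (hT0 : ∀ n, T0 (eb n) = w n • eb (n + 1))
    (hT1 : ∀ n, T1 (eb n) = v n • eb (n + 1)) {P : H2 →L[ℂ] H2} (hP : IsSelfAdjoint P)
    (hPT : Commute P (blockT T0 T1 (α • 1))) : ∃ c : ℂ, P = c • 1 := by
  obtain ⟨hA, hB, hC, hD⟩ :=
    (isBlockCommutant_of_commute hT0 hT1 hP hPT).eq_scalar hw hv hα hc hinj
  set c := (P (E1 0)).snd 0
  have hE0 (n : ℤ) : P (E0 n) = c • E0 n := by
    refine H2_ext (lp.ext (funext fun m => ?_)) (lp.ext (funext fun m => ?_))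
    · simpa [E0, eb_apply] using hA m n
    · simpa [E0] using hC m n
  have hE1 (n : ℤ) : P (E1 n) = c • E1 n := by
    refine H2_ext (lp.ext (funext fun m => ?_)) (lp.ext (funext fun m => ?_))
    · simpa [E1] using hB m n
    · simpa [E1, eb_apply] using hD m n
  refine ⟨conj c, ContinuousLinearMap.ext fun x => H2_ext (lp.ext (funext fun k => ?_))
    (lp.ext (funext fun k => ?_))⟩
  · rw [← inner_E0_left, ← ContinuousLinearMap.adjoint_inner_left, hP.adjoint_eq, hE0,
      inner_smul_left, inner_E0_left]
    simp
  · rw [← inner_E1_left, ← ContinuousLinearMap.adjoint_inner_left, hP.adjoint_eq, hE1,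
      inner_smul_left, inner_E1_left]
    simp

theorem irreducibility_of_T_w_v_alpha_general
    (w v : ℤ → ℂ) (hw : ∀ n, ‖w n‖ = 1) (hv : ∀ n, ‖v n‖ = 1)
    (α : ℂ) (hα : α ≠ 0)
    (T0 T1 X : Hl →L[ℂ] Hl)
    (hT0 : ∀ n : ℤ, T0 (eb n) = w n • eb (n + 1))
    (hT1 : ∀ n : ℤ, T1 (eb n) = v n • eb (n + 1))
    (hX : ∀ n : ℤ, X (eb n) = α • eb n)
    (h1 : ∃ i0 : ℤ, ∀ m n : ℤ,
      ‖w n - v n‖ ^ 2 = ‖w m - v m‖ ^ 2 → m = n ∨ m = -(n + i0))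
    (hcond : ∀ n : ℤ,
      (¬ ∃ r : ℝ, w n * w (n - 1) * starRingEnd ℂ (w n - v n) *
          starRingEnd ℂ (w (n - 1) - v (n - 1)) = (r : ℂ)) ∨
      (1 - w n * starRingEnd ℂ (v n)) * ((‖w (n - 1) - v (n - 1)‖ ^ 2 : ℝ) : ℂ) ≠
        (1 - starRingEnd ℂ (w (n - 1)) * v (n - 1)) * ((‖w n - v n‖ ^ 2 : ℝ) : ℂ)) :
    IsIrreducibleOp (blockT T0 T1 X) := by
  obtain ⟨i0, hinj⟩ := h1
  -- Both alternatives of `hcond (n + 1)` fail when `w n = v n`.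
  have hc (n : ℤ) : w n - v n ≠ 0 := by
    intro h0
    have hwv : conj (w n) * v n = 1 := by
      rw [← sub_eq_zero.1 h0, Complex.conj_mul', hw]; simp
    rcases hcond (n + 1) with h | h
    · exact h ⟨0, by simp [h0]⟩
    · exact h (by simp [h0, hwv])
  rw [eq_smul_one_of_apply_eb hX]
  exact isIrreducibleOp_of_forall_commute _ fun P hP hPT =>
    exists_eq_smul_one_of_commute_blockT hw hv hα hc hinj hT0 hT1 hP hPT

/-- Corollary 3.8: irreducibility of `T(wₙ, vₙ, α)` with unimodular weights. -/
theorem irreducibility_of_T_w_v_alpha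
    (w v : ℤ → ℂ) (hw : ∀ n, ‖w n‖ = 1) (hv : ∀ n, ‖v n‖ = 1)
    (α : ℂ) (hα : α ≠ 0)
    (T0 T1 X : Hl →L[ℂ] Hl)
    (hT0 : ∀ n : ℤ, T0 (eb n) = w n • eb (n + 1))
    (hT1 : ∀ n : ℤ, T1 (eb n) = v n • eb (n + 1))
    (hX : ∀ n : ℤ, X (eb n) = α • eb n)
    (hXT : X.comp T1 ≠ T0.comp X)
    (h1 : ∃ i0 : ℤ, ∀ m n : ℤ,
      ‖w n - v n‖ ^ 2 = ‖w m - v m‖ ^ 2 → m = n ∨ m = -(n + i0))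
    (hcond : ∀ n : ℤ,
      (¬ ∃ r : ℝ, w n * w (n - 1) * starRingEnd ℂ (w n - v n) *
          starRingEnd ℂ (w (n - 1) - v (n - 1)) = (r : ℂ)) ∨
      (1 - w n * starRingEnd ℂ (v n)) * ((‖w (n - 1) - v (n - 1)‖ ^ 2 : ℝ) : ℂ) ≠
        (1 - starRingEnd ℂ (w (n - 1)) * v (n - 1)) * ((‖w n - v n‖ ^ 2 : ℝ) : ℂ)) :
    IsIrreducibleOp (blockT T0 T1 X) :=
  irreducibility_of_T_w_v_alpha_general w v hw hv α hα T0 T1 X hT0 hT1 hX h1 hcond
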